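/- arXiv:1803.06523 — 4 statements merged into one kernel-verified Lean document; each statement's English description precedes it below -/
import Mathlib

section
/- Let h : ℝ^m → ℝ be convex and L-Lipschitz, and let c : ℝ^d → ℝ^m be a C¹-smooth map whose derivative (Jacobian) is β-Lipschitz continuous in the operator norm. Then the composite function φ(x) = h(c(x)) is Lβ-weakly convex, i.e., x ↦ h(c(x)) + (Lβ/2)‖x‖² is convex. -/
/-!
A Taylor estimate with a `β`-Lipschitz Jacobian bounds the defect of `c` along a segment:
`‖a • c x + b • c y - c (a • x + b • y)‖ ≤ β / 2 * a * b * ‖x - y‖ ^ 2`, since the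
first-order terms cancel. Convexity and `L`-Lipschitz continuity of `h` then give
`h (c (a • x + b • y)) ≤ a * h (c x) + b * h (c y) + L * β / 2 * a * b * ‖x - y‖ ^ 2`,
i.e. `h ∘ c` is strongly convex with the negative modulus `-(L * β)`; in an inner product space
this is convexity of `h ∘ c + L * β / 2 * ‖·‖ ^ 2`.
-/

open Set

section

variable {E F : Type*} [NormedAddCommGroup E] [NormedSpace ℝ E]
  [NormedAddCommGroup F] [NormedSpace ℝ F] {c : E → F} {β : ℝ}

theorem norm_image_add_sub_sub_fderiv_le (hc : Differentiable ℝ c)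
    (hJ : ∀ x y, ‖fderiv ℝ c x - fderiv ℝ c y‖ ≤ β * ‖x - y‖) (z v : E) :
    ‖c (z + v) - c z - fderiv ℝ c z v‖ ≤ β / 2 * ‖v‖ ^ 2 := by
  set D := fderiv ℝ c z
  have hf (s : ℝ) : HasDerivAt (fun s : ℝ => c (z + s • v) - c z - s • D v)
      (fderiv ℝ c (z + s • v) v - D v) s := by
    have hline : HasDerivAt (fun s : ℝ => z + s • v) v s := by
      simpa using ((hasDerivAt_id s).smul_const v).const_add z
    exact (((hc _).hasFDerivAt.comp_hasDerivAt s hline).sub_const (c z)).sub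
      (by simpa using (hasDerivAt_id s).smul_const (D v))
  have hB (s : ℝ) :
      HasDerivAt (fun s : ℝ => β / 2 * ‖v‖ ^ 2 * s ^ 2) (β * ‖v‖ ^ 2 * s) s :=
    ((hasDerivAt_pow 2 s).const_mul _).congr_deriv (by norm_num; ring)
  have bound :
      ∀ s ∈ Ico (0 : ℝ) 1, ‖fderiv ℝ c (z + s • v) v - D v‖ ≤ β * ‖v‖ ^ 2 * s := by
    intro s hs
    calc ‖fderiv ℝ c (z + s • v) v - D v‖ = ‖(fderiv ℝ c (z + s • v) - D) v‖ := rfl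
      _ ≤ ‖fderiv ℝ c (z + s • v) - D‖ * ‖v‖ := ContinuousLinearMap.le_opNorm _ _
      _ ≤ β * ‖z + s • v - z‖ * ‖v‖ := by gcongr; exact hJ _ _
      _ = β * ‖v‖ ^ 2 * s := by
        rw [add_sub_cancel_left, norm_smul, Real.norm_of_nonneg hs.1]; ring
  simpa using image_norm_le_of_norm_deriv_right_le_deriv_boundary
    (fun s _ => (hf s).continuousAt.continuousWithinAt) (fun s _ => (hf s).hasDerivWithinAt)
    (by simp) hB bound (right_mem_Icc.2 zero_le_one)

theorem norm_smul_add_smul_sub_image_le (hc : Differentiable ℝ c)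
    (hJ : ∀ x y, ‖fderiv ℝ c x - fderiv ℝ c y‖ ≤ β * ‖x - y‖) (x y : E) {a b : ℝ}
    (ha : 0 ≤ a) (hb : 0 ≤ b) (hab : a + b = 1) :
    ‖a • c x + b • c y - c (a • x + b • y)‖ ≤ β / 2 * a * b * ‖x - y‖ ^ 2 := by
  set z := a • x + b • y
  set D := fderiv ℝ c z
  obtain rfl : b = 1 - a := by linarith
  have hx : x = z + (1 - a) • (x - y) := by module
  have hy : y = z + (-a) • (x - y) := by module
  have hdecomp : a • c x + (1 - a) • c y - c z =
      a • (c (z + (1 - a) • (x - y)) - c z - D ((1 - a) • (x - y))) +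
        (1 - a) • (c (z + (-a) • (x - y)) - c z - D ((-a) • (x - y))) := by
    rw [← hx, ← hy, map_smul, map_smul]; module
  rw [hdecomp]
  calc _ ≤ a * (β / 2 * ‖(1 - a) • (x - y)‖ ^ 2) +
        (1 - a) * (β / 2 * ‖(-a) • (x - y)‖ ^ 2) := by
        refine (norm_add_le _ _).trans ?_
        rw [norm_smul, norm_smul, Real.norm_of_nonneg ha, Real.norm_of_nonneg hb]
        gcongr <;> exact norm_image_add_sub_sub_fderiv_le hc hJ _ _
    _ = β / 2 * a * (1 - a) * ‖x - y‖ ^ 2 := by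
        rw [norm_smul, norm_smul, Real.norm_of_nonneg hb, norm_neg, Real.norm_of_nonneg ha]; ring

theorem strongConvexOn_neg_comp_of_lipschitz_fderiv {h : F → ℝ} {L : ℝ} (hL : 0 ≤ L)
    (hconv : ConvexOn ℝ univ h) (hlip : ∀ u v, |h u - h v| ≤ L * ‖u - v‖)
    (hc : Differentiable ℝ c)
    (hJ : ∀ x y, ‖fderiv ℝ c x - fderiv ℝ c y‖ ≤ β * ‖x - y‖) :
    StrongConvexOn univ (-(L * β)) (h ∘ c) := by
  refine ⟨convex_univ, fun x _ y _ a b ha hb hab => ?_⟩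
  set w := a • c x + b • c y
  have hlip_w : h (c (a • x + b • y)) ≤ h w + L * ‖w - c (a • x + b • y)‖ := by
    rw [norm_sub_rev]
    linarith [(abs_le.1 (hlip (c (a • x + b • y)) w)).2]
  calc h (c (a • x + b • y))
      ≤ (a * h (c x) + b * h (c y)) + L * (β / 2 * a * b * ‖x - y‖ ^ 2) :=
        hlip_w.trans <| add_le_add (hconv.2 trivial trivial ha hb hab)
          (mul_le_mul_of_nonneg_left (norm_smul_add_smul_sub_image_le hc hJ x y ha hb hab) hL)
    _ = _ := by simp only [Function.comp, smul_eq_mul]; ring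

end

theorem composite_weakly_convex_general
    {E : Type*} [NormedAddCommGroup E] [InnerProductSpace ℝ E]
    {F : Type*} [NormedAddCommGroup F] [InnerProductSpace ℝ F]
    (h : F → ℝ) (L : ℝ) (hL : 0 ≤ L)
    (hconv : ConvexOn ℝ Set.univ h)
    (hlip : ∀ u v : F, |h u - h v| ≤ L * ‖u - v‖)
    (c : E → F) (hc : ContDiff ℝ 1 c)
    (β : ℝ)
    (hJ : ∀ x y : E, ‖fderiv ℝ c x - fderiv ℝ c y‖ ≤ β * ‖x - y‖) :
    ConvexOn ℝ Set.univ (fun x => h (c x) + L * β / 2 * ‖x‖ ^ 2) := by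
  have := strongConvexOn_iff_convex.1 <|
    strongConvexOn_neg_comp_of_lipschitz_fderiv hL hconv hlip (hc.differentiable one_ne_zero) hJ
  simpa [neg_div] using this

/-- If `h : ℝ^m → ℝ` is convex and `L`-Lipschitz and `c : ℝ^d → ℝ^m` is `C¹`-smooth with
`β`-Lipschitz Jacobian (in the operator norm), then the composite `φ(x) = h(c(x))` is
`Lβ`-weakly convex: `x ↦ h(c(x)) + (Lβ/2)‖x‖²` is convex. -/
theorem composite_weakly_convex
    {E : Type*} [NormedAddCommGroup E] [InnerProductSpace ℝ E] [FiniteDimensional ℝ E]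
    {F : Type*} [NormedAddCommGroup F] [InnerProductSpace ℝ F] [FiniteDimensional ℝ F]
    (h : F → ℝ) (L : ℝ) (hL : 0 ≤ L)
    (hconv : ConvexOn ℝ Set.univ h)
    (hlip : ∀ u v : F, |h u - h v| ≤ L * ‖u - v‖)
    (c : E → F) (hc : ContDiff ℝ 1 c)
    (β : ℝ) (hβ : 0 ≤ β)
    (hJ : ∀ x y : E, ‖fderiv ℝ c x - fderiv ℝ c y‖ ≤ β * ‖x - y‖) :
    ConvexOn ℝ Set.univ (fun x => h (c x) + L * β / 2 * ‖x‖ ^ 2) :=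
  composite_weakly_convex_general h L hL hconv hlip c hc β hJ
end

section
/- Let f : ℝ^d → ℝ be ρ-weakly convex, let X ⊆ ℝ^d be a nonempty closed convex set, and set φ = f + δ_X (the indicator of X added to f). Let (Ω, F, P) be a probability space and G : ℝ^d × Ω → ℝ^d a measurable map such that for every x ∈ X the vector ∫_Ω G(x,ξ) dP(ξ) is a Fréchet subgradient of f at x and ∫_Ω ‖G(x,ξ)‖² dP(ξ) ≤ L². Fix x ∈ X, a real ρ̄ > ρ, a stepsize α > 0, and let x̂ = prox_{φ/ρ̄}(x). Then the single projected stochastic subgradient step x⁺(ξ) = proj_X(x − α G(x,ξ)) satisfies ∫_Ω φ_{1/ρ̄}(x⁺(ξ)) dP(ξ) ≤ φ_{1/ρ̄}(x) − α(ρ̄ − ρ)ρ̄ ‖x − x̂‖² + α²ρ̄L²/2. -/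
/-!
Since `x̂ ∈ X` competes in the infimum defining the envelope at `x⁺ = proj_X(x − αG)`, and
projecting onto `X` does not increase the distance to `x̂`, we get
`φ_{1/ρ̄}(x⁺) ≤ f(x̂) + ρ̄/2 ‖x − x̂ − αG‖²`. Expanding the square and taking expectations leaves
the cross term `−αρ̄ ⟨x − x̂, E G⟩` and the second moment `α² E‖G‖² ≤ α²L²`. Weak convexity makes
the Fréchet subgradient `E G` a global quadratic minorant of `f`, and the prox objective is
`(ρ̄ − ρ)`-strongly convex, so `f` grows quadratically away from its minimizer `x̂`; together they
give `⟨E G, x − x̂⟩ ≥ (ρ̄ − ρ)‖x − x̂‖²`. The same minorant bounds the envelope from below by a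
quadratic in `‖G‖`, which makes the envelope integrable along the step.
-/

open MeasureTheory RealInnerProductSpace

/-- `v` is a Fréchet subgradient of the real-valued function `f` at `x`:
`f(y) ≥ f(x) + ⟨v, y − x⟩ + o(‖y − x‖)` as `y → x`. -/
def IsFSubgradR {E : Type*} [NormedAddCommGroup E] [InnerProductSpace ℝ E]
    (f : E → ℝ) (x v : E) : Prop :=
  ∀ ε : ℝ, 0 < ε → ∃ δ : ℝ, 0 < δ ∧ ∀ y : E, ‖y - x‖ < δ →
    f x + ⟪v, y - x⟫ - ε * ‖y - x‖ ≤ f y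


section

variable {E : Type*} [NormedAddCommGroup E] [InnerProductSpace ℝ E]

lemma IsFSubgradR.add_half_mul_sq_norm {f : E → ℝ} {x v : E} (hv : IsFSubgradR f x v) (ρ : ℝ) :
    IsFSubgradR (fun z => f z + ρ / 2 * ‖z‖ ^ 2) x (v + ρ • x) := by
  intro ε hε
  obtain ⟨δ, hδ, hf⟩ := hv (ε / 2) (half_pos hε)
  refine ⟨min δ (ε / (|ρ| + 1)), lt_min hδ (by positivity), fun y hy => ?_⟩
  have hyδ : ‖y - x‖ < δ := hy.trans_le (min_le_left _ _)
  have hyε : (|ρ| + 1) * ‖y - x‖ ≤ ε :=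
    (le_div_iff₀' (by positivity)).1 (hy.le.trans (min_le_right _ _))
  have hsq : ‖y‖ ^ 2 = ‖x‖ ^ 2 + 2 * ⟪x, y - x⟫ + ‖y - x‖ ^ 2 := by
    rw [← norm_add_sq_real, add_sub_cancel]
  have hquad : -(ε / 2 * ‖y - x‖) ≤ ρ / 2 * ‖y - x‖ ^ 2 := by
    nlinarith [neg_abs_le ρ, norm_nonneg (y - x)]
  beta_reduce
  rw [inner_add_left, real_inner_smul_left, hsq]
  linarith [hf y hyδ]

lemma ConvexOn.add_inner_le_of_isFSubgradR {h : E → ℝ} (hh : ConvexOn ℝ Set.univ h) {x w : E}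
    (hw : IsFSubgradR h x w) (y : E) : h x + ⟪w, y - x⟫ ≤ h y := by
  suffices key : ∀ ε > 0, ⟪w, y - x⟫ - ε * ‖y - x‖ ≤ h y - h x by
    refine le_of_forall_pos_le_add fun ε hε => ?_
    have hkey := key (ε / (‖y - x‖ + 1)) (by positivity)
    have hsmall : ε / (‖y - x‖ + 1) * ‖y - x‖ ≤ ε := by
      rw [div_mul_eq_mul_div, div_le_iff₀ (by positivity)]
      nlinarith [norm_nonneg (y - x)]
    linarith
  intro ε hε
  obtain ⟨δ, hδ, hlocal⟩ := hw ε hε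
  obtain ⟨c, hc, hcδ⟩ := exists_pos_mul_lt hδ ‖y - x‖
  set t := min c 1
  have ht : 0 < t := lt_min hc one_pos
  have hstep : ‖t • (y - x)‖ = t * ‖y - x‖ := by rw [norm_smul, Real.norm_of_nonneg ht.le]
  have hnear := hlocal (x + t • (y - x)) (by
    rw [add_sub_cancel_left, hstep, mul_comm]
    exact (mul_le_mul_of_nonneg_left (min_le_left c 1) (norm_nonneg _)).trans_lt hcδ)
  have hconv := hh.2 (Set.mem_univ x) (Set.mem_univ y) (sub_nonneg.2 (min_le_right c 1)) ht.le
    (sub_add_cancel 1 t)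
  rw [show (1 - t) • x + t • y = x + t • (y - x) by module, smul_eq_mul, smul_eq_mul] at hconv
  rw [add_sub_cancel_left, hstep, real_inner_smul_right] at hnear
  nlinarith

lemma IsFSubgradR.add_inner_sub_le_of_weaklyConvex {f : E → ℝ} {x v : E}
    (hv : IsFSubgradR f x v) {ρ : ℝ} (hwc : ConvexOn ℝ Set.univ fun z => f z + ρ / 2 * ‖z‖ ^ 2)
    (y : E) : f x + ⟪v, y - x⟫ - ρ / 2 * ‖y - x‖ ^ 2 ≤ f y := by
  have := hwc.add_inner_le_of_isFSubgradR (hv.add_half_mul_sq_norm ρ) y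
  have hsq : ‖y‖ ^ 2 = ‖x‖ ^ 2 + 2 * ⟪x, y - x⟫ + ‖y - x‖ ^ 2 := by
    rw [← norm_add_sq_real, add_sub_cancel]
  rw [inner_add_left, real_inner_smul_left, hsq] at this
  linarith

open Filter Topology in
lemma StrongConvexOn.add_sq_norm_le_of_isMinOn {s : Set E} {m : ℝ} {ψ : E → ℝ}
    (hψ : StrongConvexOn s m ψ) {x₀ y : E} (hmin : IsMinOn ψ s x₀) (hx₀ : x₀ ∈ s) (hy : y ∈ s) :
    ψ x₀ + m / 2 * ‖y - x₀‖ ^ 2 ≤ ψ y := by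
  have hlim : Tendsto (fun t : ℝ => ψ x₀ + (1 - t) * (m / 2 * ‖y - x₀‖ ^ 2)) (𝓝[>] 0)
      (𝓝 (ψ x₀ + m / 2 * ‖y - x₀‖ ^ 2)) := by
    have : Continuous fun t : ℝ => ψ x₀ + (1 - t) * (m / 2 * ‖y - x₀‖ ^ 2) := by fun_prop
    simpa using (this.tendsto 0).mono_left nhdsWithin_le_nhds
  refine le_of_tendsto hlim ?_
  filter_upwards [Ioo_mem_nhdsGT one_pos] with t ⟨ht0, ht1⟩
  have hconv := hψ.2 hx₀ hy (sub_nonneg.2 ht1.le) ht0.le (sub_add_cancel 1 t)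
  have hle := isMinOn_iff.1 hmin _ (hψ.1 hx₀ hy (sub_nonneg.2 ht1.le) ht0.le (sub_add_cancel 1 t))
  rw [smul_eq_mul, smul_eq_mul, norm_sub_rev] at hconv
  have : t * (ψ x₀ + (1 - t) * (m / 2 * ‖y - x₀‖ ^ 2)) ≤ t * ψ y := by
    nlinarith
  exact le_of_mul_le_mul_left this ht0

lemma ConvexOn.strongConvexOn_add_sq_norm_sub {s : Set E} {f : E → ℝ} {ρ : ℝ}
    (hwc : ConvexOn ℝ s fun z => f z + ρ / 2 * ‖z‖ ^ 2) (ρb : ℝ) (x : E) :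
    StrongConvexOn s (ρb - ρ) fun y => f y + ρb / 2 * ‖y - x‖ ^ 2 := by
  rw [strongConvexOn_iff_convex]
  have hsplit : (fun y => f y + ρb / 2 * ‖y - x‖ ^ 2 - (ρb - ρ) / 2 * ‖y‖ ^ 2)
      = fun y => (f y + ρ / 2 * ‖y‖ ^ 2 + innerSL ℝ (-ρb • x) y) + ρb / 2 * ‖x‖ ^ 2 := by
    funext y
    rw [innerSL_apply_apply, real_inner_smul_left, norm_sub_sq_real, real_inner_comm]
    ring
  rw [hsplit]
  exact (hwc.add ((innerSL ℝ (-ρb • x)).toLinearMap.convexOn hwc.1)).add_const _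

lemma IsFSubgradR.mul_sq_norm_sub_le_inner_of_isMinOn {f : E → ℝ} {ρ ρb : ℝ}
    (hwc : ConvexOn ℝ Set.univ fun z => f z + ρ / 2 * ‖z‖ ^ 2) {X : Set E} (hX : Convex ℝ X)
    {x v xhat : E} (hv : IsFSubgradR f x v) (hx : x ∈ X) (hxhat : xhat ∈ X)
    (hmin : IsMinOn (fun y => f y + ρb / 2 * ‖y - x‖ ^ 2) X xhat) :
    (ρb - ρ) * ‖x - xhat‖ ^ 2 ≤ ⟪v, x - xhat⟫ := by
  have hgrowth := ((hwc.subset (Set.subset_univ X) hX).strongConvexOn_add_sq_norm_sub ρb x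
    ).add_sq_norm_le_of_isMinOn hmin hxhat hx
  have hlower := hv.add_inner_sub_le_of_weaklyConvex hwc xhat
  rw [sub_self, norm_zero, norm_sub_rev xhat x] at hgrowth
  rw [← neg_sub x xhat, inner_neg_right, norm_neg] at hlower
  linarith

lemma sub_div_le_add_half_mul_sq_norm_sub {f : E → ℝ} {x v : E} {ρ ρb : ℝ}
    (hlow : ∀ y, f x + ⟪v, y - x⟫ - ρ / 2 * ‖y - x‖ ^ 2 ≤ f y) (hρb : 0 ≤ ρb) (hρ : ρ < ρb)
    (y z : E) :
    f x - (‖v‖ ^ 2 + ρb ^ 2 * ‖z - x‖ ^ 2) / (ρb - ρ) ≤ f y + ρb / 2 * ‖y - z‖ ^ 2 := by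
  -- complete the square in `‖y - x‖`; the crude constant is chosen to be quadratic in `‖z - x‖`
  have hμ : 0 < ρb - ρ := sub_pos.2 hρ
  have hexp : ‖y - z‖ ^ 2 = ‖y - x‖ ^ 2 - 2 * ⟪y - x, z - x⟫ + ‖z - x‖ ^ 2 := by
    rw [← norm_sub_sq_real, sub_sub_sub_cancel_right]
  have hv := neg_le_of_abs_le (abs_real_inner_le_norm v (y - x))
  have hzx := mul_le_mul_of_nonneg_left (real_inner_le_norm (y - x) (z - x)) hρb
  have key : f x - (f y + ρb / 2 * ‖y - z‖ ^ 2) ≤ ‖v‖ * ‖y - x‖ - (ρb - ρ) / 2 * ‖y - x‖ ^ 2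
      + ρb * (‖y - x‖ * ‖z - x‖) := by
    nlinarith [hlow y, mul_nonneg hρb (sq_nonneg ‖z - x‖)]
  rw [sub_le_comm, le_div_iff₀ hμ]
  nlinarith [sq_nonneg ((ρb - ρ) * ‖y - x‖ - ‖v‖ - ρb * ‖z - x‖), sq_nonneg (‖v‖ - ρb * ‖z - x‖),
    mul_le_mul_of_nonneg_right key hμ.le]

lemma upperSemicontinuous_of_forall_isGLB_image {α β γ : Type*} [TopologicalSpace β]
    [LinearOrder γ] {F : α → β → γ} (hF : ∀ a, UpperSemicontinuous (F a)) {s : Set α}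
    {g : β → γ} (hg : ∀ z, IsGLB ((fun a => F a z) '' s) (g z)) : UpperSemicontinuous g := by
  intro z c hc
  obtain ⟨_, ⟨a, ha, rfl⟩, -, hac⟩ := (hg z).exists_between hc
  filter_upwards [hF a z c hac] with z' hz'
  exact ((hg z').1 ⟨a, ha, rfl⟩).trans_lt hz'

def IsNearestPointMap (X : Set E) (proj : E → E) : Prop :=
  ∀ z, proj z ∈ X ∧ ∀ y ∈ X, ‖z - proj z‖ ≤ ‖z - y‖

namespace IsNearestPointMap

variable {X : Set E} {proj : E → E}

lemma inner_sub_le_zero (hp : IsNearestPointMap X proj) (hX : Convex ℝ X) (z : E) {y : E}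
    (hy : y ∈ X) : ⟪z - proj z, y - proj z⟫ ≤ 0 := by
  have : Nonempty X := ⟨⟨y, hy⟩⟩
  refine (norm_eq_iInf_iff_real_inner_le_zero hX (hp z).1).1 (le_antisymm ?_ ?_) y hy
  · exact le_ciInf fun w => (hp z).2 w w.2
  · exact ciInf_le ⟨0, by rintro _ ⟨w, rfl⟩; positivity⟩ (⟨proj z, (hp z).1⟩ : X)

lemma norm_sub_le (hp : IsNearestPointMap X proj) (hX : Convex ℝ X) (z : E) {y : E}
    (hy : y ∈ X) : ‖proj z - y‖ ≤ ‖z - y‖ := by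
  have hobtuse := hp.inner_sub_le_zero hX z hy
  have hexp := norm_add_sq_real (z - proj z) (proj z - y)
  rw [sub_add_sub_cancel, ← neg_sub y (proj z), inner_neg_right, norm_neg] at hexp
  rw [norm_sub_rev, ← sq_le_sq₀ (norm_nonneg _) (norm_nonneg _)]
  nlinarith [sq_nonneg ‖z - proj z‖]

lemma lipschitzWith_one (hp : IsNearestPointMap X proj) (hX : Convex ℝ X) :
    LipschitzWith 1 proj := by
  refine LipschitzWith.of_dist_le_mul fun z₁ z₂ => ?_
  rw [NNReal.coe_one, one_mul, dist_eq_norm, dist_eq_norm]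
  have h₁ := hp.inner_sub_le_zero hX z₁ (hp z₂).1
  have h₂ := hp.inner_sub_le_zero hX z₂ (hp z₁).1
  rw [← neg_sub (proj z₁) (proj z₂), inner_neg_right] at h₁
  have hmono : ‖proj z₁ - proj z₂‖ ^ 2 ≤ ⟪z₁ - z₂, proj z₁ - proj z₂⟫ := by
    rw [show z₁ - z₂ = (z₁ - proj z₁) - (z₂ - proj z₂) + (proj z₁ - proj z₂) by abel,
      inner_add_left, inner_sub_left, real_inner_self_eq_norm_sq]
    linarith
  nlinarith [real_inner_le_norm (z₁ - z₂) (proj z₁ - proj z₂), norm_nonneg (proj z₁ - proj z₂),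
    norm_nonneg (z₁ - z₂)]

end IsNearestPointMap

lemma norm_sub_smul_sq_real (u w : E) (a : ℝ) :
    ‖u - a • w‖ ^ 2 = ‖u‖ ^ 2 - 2 * a * ⟪u, w⟫ + a ^ 2 * ‖w‖ ^ 2 := by
  rw [norm_sub_sq_real, real_inner_smul_right, norm_smul, mul_pow, Real.norm_eq_abs, sq_abs]
  ring

section Integral

variable {Ω : Type*} [MeasurableSpace Ω] {P : Measure Ω}

lemma integrable_of_lintegral_ofReal_le {g : Ω → ℝ} (hg : AEStronglyMeasurable g P)
    (hg0 : 0 ≤ᵐ[P] g) {c : ℝ} (h : ∫⁻ ξ, ENNReal.ofReal (g ξ) ∂P ≤ ENNReal.ofReal c) :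
    Integrable g P :=
  ⟨hg, (hasFiniteIntegral_iff_ofReal hg0).2 (h.trans_lt ENNReal.ofReal_lt_top)⟩

lemma integral_le_of_lintegral_ofReal_le {g : Ω → ℝ} (hg : AEStronglyMeasurable g P)
    (hg0 : 0 ≤ᵐ[P] g) {c : ℝ} (hc : 0 ≤ c) (h : ∫⁻ ξ, ENNReal.ofReal (g ξ) ∂P ≤ ENNReal.ofReal c) :
    ∫ ξ, g ξ ∂P ≤ c := by
  rw [integral_eq_lintegral_of_nonneg_ae hg0 hg]
  exact ENNReal.toReal_le_of_le_ofReal hc h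

variable [IsProbabilityMeasure P] {V : Ω → E}

lemma integrable_norm_sub_smul_sq (hV : Integrable V P)
    (hV2 : Integrable (fun ξ => ‖V ξ‖ ^ 2) P) (u : E) (a : ℝ) :
    Integrable (fun ξ => ‖u - a • V ξ‖ ^ 2) P := by
  simp_rw [norm_sub_smul_sq_real]
  exact ((integrable_const _).sub ((hV.const_inner u).const_mul _)).add (hV2.const_mul _)

lemma integral_norm_sub_smul_sq [CompleteSpace E] (hV : Integrable V P)
    (hV2 : Integrable (fun ξ => ‖V ξ‖ ^ 2) P) (u : E) (a : ℝ) :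
    ∫ ξ, ‖u - a • V ξ‖ ^ 2 ∂P
      = ‖u‖ ^ 2 - 2 * a * ⟪u, ∫ ξ, V ξ ∂P⟫ + a ^ 2 * ∫ ξ, ‖V ξ‖ ^ 2 ∂P := by
  have hlin : Integrable (fun ξ => ‖u‖ ^ 2 - 2 * a * ⟪u, V ξ⟫) P :=
    (integrable_const _).sub ((hV.const_inner u).const_mul _)
  simp_rw [norm_sub_smul_sq_real]
  rw [integral_add hlin (hV2.const_mul _), integral_sub (integrable_const _)
      ((hV.const_inner u).const_mul _), integral_const, integral_const_mul, integral_const_mul,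
    integral_inner hV, probReal_univ, one_smul]

end Integral

end

section MoreauEnvelope

variable {E : Type*} [NormedAddCommGroup E]

def IsMoreauEnvelope (f : E → ℝ) (ρb : ℝ) (X : Set E) (env : E → ℝ) : Prop :=
  ∀ z, IsGLB ((fun y => f y + ρb / 2 * ‖y - z‖ ^ 2) '' X) (env z)

namespace IsMoreauEnvelope

variable {f : E → ℝ} {ρb : ℝ} {X : Set E} {env : E → ℝ}

lemma apply_eq_of_isMinOn (henv : IsMoreauEnvelope f ρb X env) {x xhat : E} (hxhat : xhat ∈ X)
    (hmin : IsMinOn (fun y => f y + ρb / 2 * ‖y - x‖ ^ 2) X xhat) :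
    env x = f xhat + ρb / 2 * ‖xhat - x‖ ^ 2 :=
  (henv x).unique (hmin.isGLB hxhat)

lemma upperSemicontinuous (henv : IsMoreauEnvelope f ρb X env) : UpperSemicontinuous env :=
  upperSemicontinuous_of_forall_isGLB_image (F := fun y z => f y + ρb / 2 * ‖y - z‖ ^ 2)
    (fun _ => (by fun_prop : Continuous _).upperSemicontinuous) henv

variable [InnerProductSpace ℝ E] {proj : E → E}

lemma apply_proj_le (henv : IsMoreauEnvelope f ρb X env) (hp : IsNearestPointMap X proj)
    (hX : Convex ℝ X) (hρb : 0 ≤ ρb) (u : E) {y : E} (hy : y ∈ X) :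
    env (proj u) ≤ f y + ρb / 2 * ‖u - y‖ ^ 2 := by
  refine ((henv (proj u)).1 ⟨y, hy, rfl⟩).trans ?_
  dsimp only
  rw [norm_sub_rev y]
  gcongr
  exact hp.norm_sub_le hX u hy

lemma sub_div_le_apply_proj (henv : IsMoreauEnvelope f ρb X env) (hp : IsNearestPointMap X proj)
    (hX : Convex ℝ X) (hρb : 0 ≤ ρb) {ρ : ℝ} (hρ : ρ < ρb) {x v : E} (hx : x ∈ X)
    (hlow : ∀ y, f x + ⟪v, y - x⟫ - ρ / 2 * ‖y - x‖ ^ 2 ≤ f y) (u : E) :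
    f x - (‖v‖ ^ 2 + ρb ^ 2 * ‖u - x‖ ^ 2) / (ρb - ρ) ≤ env (proj u) := by
  have hbound : f x - (‖v‖ ^ 2 + ρb ^ 2 * ‖proj u - x‖ ^ 2) / (ρb - ρ) ≤ env (proj u) := by
    refine (henv (proj u)).2 ?_
    rintro _ ⟨y, -, rfl⟩
    exact sub_div_le_add_half_mul_sq_norm_sub hlow hρb hρ y (proj u)
  refine le_trans ?_ hbound
  have hμ : 0 < ρb - ρ := sub_pos.2 hρ
  gcongr
  exact hp.norm_sub_le hX u hx

lemma integral_apply_proj_sub_smul_le [CompleteSpace E] [MeasurableSpace E] [BorelSpace E]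
    {Ω : Type*} [MeasurableSpace Ω] {P : Measure Ω} [IsProbabilityMeasure P]
    (henv : IsMoreauEnvelope f ρb X env) (hp : IsNearestPointMap X proj) (hX : Convex ℝ X)
    {ρ : ℝ} (hρb0 : 0 ≤ ρb) (hρb : ρ < ρb) {x v xhat : E} (hx : x ∈ X) (hxhat : xhat ∈ X)
    (hlow : ∀ y, f x + ⟪v, y - x⟫ - ρ / 2 * ‖y - x‖ ^ 2 ≤ f y)
    {V : Ω → E} (hV : Integrable V P) (hV2 : Integrable (fun ξ => ‖V ξ‖ ^ 2) P) (a : ℝ) :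
    ∫ ξ, env (proj (x - a • V ξ)) ∂P ≤ f xhat + ρb / 2 * (‖x - xhat‖ ^ 2
      - 2 * a * ⟪x - xhat, ∫ ξ, V ξ ∂P⟫ + a ^ 2 * ∫ ξ, ‖V ξ‖ ^ 2 ∂P) := by
  have habove (ξ : Ω) : env (proj (x - a • V ξ)) ≤ f xhat + ρb / 2 * ‖x - xhat - a • V ξ‖ ^ 2 := by
    rw [sub_right_comm]
    exact henv.apply_proj_le hp hX hρb0 _ hxhat
  have hbelow (ξ : Ω) : f x - (‖v‖ ^ 2 + ρb ^ 2 * (a ^ 2 * ‖V ξ‖ ^ 2)) / (ρb - ρ)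
      ≤ env (proj (x - a • V ξ)) := by
    have := henv.sub_div_le_apply_proj hp hX hρb0 hρb hx hlow (x - a • V ξ)
    rwa [sub_sub_cancel_left, norm_neg, norm_smul, mul_pow, Real.norm_eq_abs, sq_abs] at this
  have hstep : AEMeasurable (fun ξ => proj (x - a • V ξ)) P :=
    ((hp.lipschitzWith_one hX).continuous.comp (by fun_prop : Continuous fun w : E => x - a • w)
      ).measurable.comp_aemeasurable hV.aemeasurable
  have hupint : Integrable (fun ξ => f xhat + ρb / 2 * ‖x - xhat - a • V ξ‖ ^ 2) P :=
    (integrable_const _).add ((integrable_norm_sub_smul_sq hV hV2 _ a).const_mul _)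
  have hlowint : Integrable
      (fun ξ => f x - (‖v‖ ^ 2 + ρb ^ 2 * (a ^ 2 * ‖V ξ‖ ^ 2)) / (ρb - ρ)) P :=
    (integrable_const _).sub
      (((integrable_const _).add ((hV2.const_mul _).const_mul _)).div_const _)
  have hint : Integrable (fun ξ => env (proj (x - a • V ξ))) P :=
    integrable_of_le_of_le (henv.upperSemicontinuous.measurable.comp_aemeasurable
      hstep).aestronglyMeasurable (ae_of_all _ hbelow) (ae_of_all _ habove) hlowint hupint
  calc ∫ ξ, env (proj (x - a • V ξ)) ∂P
      ≤ ∫ ξ, f xhat + ρb / 2 * ‖x - xhat - a • V ξ‖ ^ 2 ∂P := integral_mono hint hupint habove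
    _ = _ := by
      rw [integral_add (integrable_const _) ((integrable_norm_sub_smul_sq hV hV2 _ a).const_mul _),
        integral_const, integral_const_mul, integral_norm_sub_smul_sq hV hV2, probReal_univ,
        one_smul]

end IsMoreauEnvelope

end MoreauEnvelope

theorem projected_stochastic_subgradient_one_step_general
    {E : Type*} [NormedAddCommGroup E] [InnerProductSpace ℝ E] [FiniteDimensional ℝ E]
    [MeasurableSpace E] [BorelSpace E]
    {Ω : Type*} [MeasurableSpace Ω] (P : Measure Ω) [IsProbabilityMeasure P]
    (f : E → ℝ) (ρ : ℝ) (hρ : 0 ≤ ρ)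
    (hwc : ConvexOn ℝ Set.univ fun z => f z + ρ / 2 * ‖z‖ ^ 2)
    (X : Set E) (hXconv : Convex ℝ X)
    (G : E → Ω → E)
    (L : ℝ)
    (hGint : ∀ x ∈ X, Integrable (G x) P)
    (hGgrad : ∀ x ∈ X, IsFSubgradR f x (∫ ξ, G x ξ ∂P))
    (hGmom : ∀ x ∈ X, ∫⁻ ξ, ENNReal.ofReal (‖G x ξ‖ ^ 2) ∂P ≤ ENNReal.ofReal (L ^ 2))
    (proj : E → E)
    (hproj : ∀ z : E, proj z ∈ X ∧ ∀ y ∈ X, ‖z - proj z‖ ≤ ‖z - y‖)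
    (ρb : ℝ) (hρb : ρ < ρb) (a : ℝ) (ha : 0 < a)
    (x : E) (hx : x ∈ X)
    (xhat : E) (hxhatX : xhat ∈ X)
    (hxhatmin : ∀ y ∈ X,
      f xhat + ρb / 2 * ‖xhat - x‖ ^ 2 ≤ f y + ρb / 2 * ‖y - x‖ ^ 2)
    (env : E → ℝ)
    (henv : ∀ z : E, IsGLB ((fun y => f y + ρb / 2 * ‖y - z‖ ^ 2) '' X) (env z)) :
    ∫ ξ, env (proj (x - a • G x ξ)) ∂P
      ≤ env x - a * (ρb - ρ) * ρb * ‖x - xhat‖ ^ 2 + a ^ 2 * ρb * L ^ 2 / 2 := by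
  have hρb0 : 0 ≤ ρb := hρ.trans hρb.le
  have hmin : IsMinOn (fun y => f y + ρb / 2 * ‖y - x‖ ^ 2) X xhat := isMinOn_iff.2 hxhatmin
  have hdesc : (ρb - ρ) * ‖x - xhat‖ ^ 2 ≤ ⟪x - xhat, ∫ ξ, G x ξ ∂P⟫ := by
    rw [real_inner_comm]
    exact (hGgrad x hx).mul_sq_norm_sub_le_inner_of_isMinOn hwc hXconv hx hxhatX hmin
  have henvx : env x = f xhat + ρb / 2 * ‖x - xhat‖ ^ 2 :=
    norm_sub_rev xhat x ▸ IsMoreauEnvelope.apply_eq_of_isMinOn henv hxhatX hmin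
  have hG2 : AEStronglyMeasurable (fun ξ => ‖G x ξ‖ ^ 2) P :=
    (hGint x hx).norm.aestronglyMeasurable.pow 2
  have hG2L : ∫ ξ, ‖G x ξ‖ ^ 2 ∂P ≤ L ^ 2 := integral_le_of_lintegral_ofReal_le hG2
    (ae_of_all _ fun _ => sq_nonneg _) (sq_nonneg L) (hGmom x hx)
  calc ∫ ξ, env (proj (x - a • G x ξ)) ∂P
      ≤ f xhat + ρb / 2 * (‖x - xhat‖ ^ 2 - 2 * a * ⟪x - xhat, ∫ ξ, G x ξ ∂P⟫
          + a ^ 2 * ∫ ξ, ‖G x ξ‖ ^ 2 ∂P) :=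
        IsMoreauEnvelope.integral_apply_proj_sub_smul_le henv hproj hXconv hρb0 hρb hx hxhatX
          ((hGgrad x hx).add_inner_sub_le_of_weaklyConvex hwc) (hGint x hx)
          (integrable_of_lintegral_ofReal_le hG2 (ae_of_all _ fun _ => sq_nonneg _) (hGmom x hx)) a
    _ ≤ env x - a * (ρb - ρ) * ρb * ‖x - xhat‖ ^ 2 + a ^ 2 * ρb * L ^ 2 / 2 := by
      rw [henvx]
      nlinarith [mul_le_mul_of_nonneg_left hdesc (mul_nonneg hρb0 ha.le),
        mul_le_mul_of_nonneg_left hG2L (mul_nonneg hρb0 (sq_nonneg a))]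

/-- One step of the projected stochastic subgradient method on `φ = f + δ_X`, with `f`
`ρ`-weakly convex and a stochastic subgradient oracle `G` with second moment bound `L²`,
decreases the Moreau envelope `φ_{1/ρ̄}` (denoted `env`, characterized as a greatest lower
bound) in expectation:
`E[env(proj_X(x − αG(x,ξ)))] ≤ env(x) − α(ρ̄−ρ)ρ̄‖x − x̂‖² + α²ρ̄L²/2`,
where `x̂ = prox_{φ/ρ̄}(x)`.  (Recall `‖∇φ_{1/ρ̄}(x)‖ = ρ̄‖x − x̂‖`.) -/
theorem projected_stochastic_subgradient_one_step
    {E : Type*} [NormedAddCommGroup E] [InnerProductSpace ℝ E] [FiniteDimensional ℝ E]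
    [MeasurableSpace E] [BorelSpace E]
    {Ω : Type*} [MeasurableSpace Ω] (P : Measure Ω) [IsProbabilityMeasure P]
    (f : E → ℝ) (ρ : ℝ) (hρ : 0 ≤ ρ)
    (hwc : ConvexOn ℝ Set.univ fun z => f z + ρ / 2 * ‖z‖ ^ 2)
    (X : Set E) (hXne : X.Nonempty) (hXcl : IsClosed X) (hXconv : Convex ℝ X)
    (G : E → Ω → E) (hGmeas : Measurable fun p : E × Ω => G p.1 p.2)
    (L : ℝ)
    (hGint : ∀ x ∈ X, Integrable (G x) P)
    (hGgrad : ∀ x ∈ X, IsFSubgradR f x (∫ ξ, G x ξ ∂P))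
    (hGmom : ∀ x ∈ X, ∫⁻ ξ, ENNReal.ofReal (‖G x ξ‖ ^ 2) ∂P ≤ ENNReal.ofReal (L ^ 2))
    (proj : E → E)
    (hproj : ∀ z : E, proj z ∈ X ∧ ∀ y ∈ X, ‖z - proj z‖ ≤ ‖z - y‖)
    (ρb : ℝ) (hρb : ρ < ρb) (a : ℝ) (ha : 0 < a)
    (x : E) (hx : x ∈ X)
    (xhat : E) (hxhatX : xhat ∈ X)
    (hxhatmin : ∀ y ∈ X,
      f xhat + ρb / 2 * ‖xhat - x‖ ^ 2 ≤ f y + ρb / 2 * ‖y - x‖ ^ 2)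
    (env : E → ℝ)
    (henv : ∀ z : E, IsGLB ((fun y => f y + ρb / 2 * ‖y - z‖ ^ 2) '' X) (env z)) :
    ∫ ξ, env (proj (x - a • G x ξ)) ∂P
      ≤ env x - a * (ρb - ρ) * ρb * ‖x - xhat‖ ^ 2 + a ^ 2 * ρb * L ^ 2 / 2 :=
  projected_stochastic_subgradient_one_step_general P f ρ hρ hwc X hXconv G L hGint hGgrad hGmom
    proj hproj ρb hρb a ha x hx xhat hxhatX hxhatmin env henv
end

section
/- Let f : ℝ^d → ℝ be ρ-weakly convex, r : ℝ^d → ℝ ∪ {+∞} proper closed convex, and set φ = f + r. Let (Ω, F, P) be a probability space and G : ℝ^d × Ω → ℝ^d measurable with ∫ G(x,ξ) dP(ξ) a Fréchet subgradient of f at x and ∫ ‖G(x,ξ)‖² dP(ξ) ≤ L², for all x ∈ dom r. Fix ρ̄ ∈ (ρ, 2ρ], a stepsize α ∈ (0, 1/ρ̄], a point x ∈ dom r, and set x̂ = prox_{φ/ρ̄}(x). Suppose there is a Fréchet subgradient v̂ of f at x̂ with ‖v̂‖ ≤ L such that ρ̄(x − x̂) − v̂ ∈ ∂r(x̂). Then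 the proximal stochastic subgradient step x⁺(ξ) = prox_{αr}(x − αG(x,ξ)) satisfies ∫_Ω ‖x⁺(ξ) − x̂‖² dP(ξ) ≤ ‖x − x̂‖² + 4α²L² − 2α(ρ̄ − ρ)‖x − x̂‖². -/
/-!
Weak convexity makes the Fréchet subgradients of `f` hypomonotone:
`⟪v - w, x - y⟫ ≥ -ρ ‖x - y‖²`. The optimality condition for `x̂` says that
`x̂ = prox_{αr}(x̂ + α u)` with `u = ρ̄ (x - x̂) - v̂`, so nonexpansiveness of `prox_{αr}` bounds
`‖x⁺(ξ) - x̂‖` by `‖(1 - αρ̄)(x - x̂) - α (G(x, ξ) - v̂)‖`. Expanding this square and taking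
expectations, the cross term is controlled by hypomonotonicity at `x` and `x̂`, the second moment
by `E‖G - v̂‖² ≤ 2 E‖G‖² + 2 ‖v̂‖² ≤ 4L²`, and the leftover `α²ρ̄(ρ̄ - 2ρ) ‖x - x̂‖²` is `≤ 0`.
-/

open MeasureTheory RealInnerProductSpace

/-- Convexity for extended-real-valued functions `g : E → ℝ ∪ {+∞}` on a set `s`. -/
def ERealConvexOn {E : Type*} [AddCommMonoid E] [SMul ℝ E]
    (s : Set E) (g : E → EReal) : Prop :=
  ∀ x ∈ s, ∀ y ∈ s, ∀ a b : ℝ, 0 ≤ a → 0 ≤ b → a + b = 1 →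
    g (a • x + b • y) ≤ (a : EReal) * g x + (b : EReal) * g y

open Filter Set Topology

lemma le_of_forall_pos_le_add_mul {a b c : ℝ}
    (h : ∀ t : ℝ, 0 < t → t ≤ 1 → a ≤ b + t * c) : a ≤ b := by
  have hlim : Tendsto (fun t : ℝ => b + t * c) (𝓝[>] 0) (𝓝 b) := by
    simpa using ((by fun_prop : Continuous fun t : ℝ => b + t * c).tendsto 0).mono_left
      nhdsWithin_le_nhds
  refine ge_of_tendsto hlim ?_
  filter_upwards [Ioc_mem_nhdsGT one_pos] with t ht using h t ht.1 ht.2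

section FrechetSubgradient

variable {E : Type*} [NormedAddCommGroup E] [InnerProductSpace ℝ E]

theorem IsFSubgradR.le_of_convexOn {g : E → ℝ} {x w : E} (hg : ConvexOn ℝ univ g)
    (hw : IsFSubgradR g x w) (y : E) : g x + ⟪w, y - x⟫ ≤ g y := by
  refine le_of_forall_pos_le_add_mul (c := ‖y - x‖) fun ε hε _ => ?_
  obtain ⟨δ, hδ, hloc⟩ := hw ε hε
  obtain ⟨t, ⟨ht0, ht1⟩, htδ⟩ : ∃ t : ℝ, (0 < t ∧ t ≤ 1) ∧ t * ‖y - x‖ < δ := by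
    have hsmall : ∀ᶠ t in 𝓝 (0 : ℝ), t * ‖y - x‖ < δ :=
      (continuous_id.mul continuous_const).tendsto' 0 0 (zero_mul _) |>.eventually
        (eventually_lt_nhds hδ)
    exact nonempty_of_mem (inter_mem (Ioc_mem_nhdsGT one_pos) (nhdsWithin_le_nhds hsmall))
  have hconv := hg.2 (mem_univ x) (mem_univ y) (sub_nonneg.2 ht1) ht0.le (sub_add_cancel 1 t)
  have hnear := hloc (x + t • (y - x)) (by simpa [norm_smul, abs_of_pos ht0] using htδ)
  rw [show (1 - t) • x + t • y = x + t • (y - x) by module] at hconv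
  simp only [add_sub_cancel_left, real_inner_smul_right, norm_smul, Real.norm_eq_abs,
    abs_of_pos ht0, smul_eq_mul] at hnear hconv
  have hscaled : t * (g x + ⟪w, y - x⟫) ≤ t * (g y + ε * ‖y - x‖) := by linarith
  exact le_of_mul_le_mul_left hscaled ht0

theorem IsFSubgradR.add_sq_norm {f : E → ℝ} {x v : E} (hv : IsFSubgradR f x v) {ρ : ℝ}
    (hρ : 0 ≤ ρ) : IsFSubgradR (fun z => f z + ρ / 2 * ‖z‖ ^ 2) x (v + ρ • x) := by
  intro ε hε
  obtain ⟨δ, hδ, hloc⟩ := hv ε hε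
  refine ⟨δ, hδ, fun y hy => ?_⟩
  have hsq : ‖y‖ ^ 2 = ‖x‖ ^ 2 + 2 * ⟪x, y - x⟫ + ‖y - x‖ ^ 2 := by
    rw [← norm_add_sq_real, add_sub_cancel]
  rw [inner_add_left, real_inner_smul_left]
  nlinarith [hloc y hy, mul_nonneg hρ (sq_nonneg ‖y - x‖)]

theorem IsFSubgradR.hypomonotone {f : E → ℝ} {ρ : ℝ} (hρ : 0 ≤ ρ)
    (hf : ConvexOn ℝ univ fun z => f z + ρ / 2 * ‖z‖ ^ 2) {x y v w : E}
    (hv : IsFSubgradR f x v) (hw : IsFSubgradR f y w) :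
    -(ρ * ‖x - y‖ ^ 2) ≤ ⟪v - w, x - y⟫ := by
  have hxy := (hv.add_sq_norm hρ).le_of_convexOn hf y
  have hyx := (hw.add_sq_norm hρ).le_of_convexOn hf x
  have hsum : ⟪v + ρ • x, y - x⟫ + ⟪w + ρ • y, x - y⟫
      = -⟪v - w, x - y⟫ - ρ * ‖x - y‖ ^ 2 := by
    rw [← real_inner_self_eq_norm_sq]
    simp only [inner_add_left, inner_sub_left, inner_sub_right, real_inner_smul_right,
      real_inner_comm]
    ring
  linarith

end FrechetSubgradient

section ProximalMap

variable {E : Type*} [NormedAddCommGroup E] {r : E → EReal}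

def IsProxPoint (r : E → EReal) (a : ℝ) (z p : E) : Prop :=
  ∀ y, r p + ((1 / (2 * a) * ‖p - z‖ ^ 2 : ℝ) : EReal)
    ≤ r y + ((1 / (2 * a) * ‖y - z‖ ^ 2 : ℝ) : EReal)

theorem IsProxPoint.ne_top {a : ℝ} {z p y : E} (hp : IsProxPoint r a z p) (hy : r y ≠ ⊤) :
    r p ≠ ⊤ := by
  intro htop
  have h := hp y
  rw [htop, EReal.top_add_coe, top_le_iff] at h
  exact EReal.add_ne_top hy (EReal.coe_ne_top _) h

variable [InnerProductSpace ℝ E]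

def IsERealSubgrad (r : E → EReal) (x u : E) : Prop :=
  ∀ y, r x + ((⟪u, y - x⟫ : ℝ) : EReal) ≤ r y

theorem IsERealSubgrad.inner_sub_nonneg {p q w u : E} (hw : IsERealSubgrad r p w)
    (hu : IsERealSubgrad r q u) (htop : r p ≠ ⊤) (hbot : r p ≠ ⊥) :
    0 ≤ ⟪w - u, p - q⟫ := by
  obtain ⟨c, hc⟩ : ∃ c : ℝ, r p = c := ⟨_, (EReal.coe_toReal htop hbot).symm⟩
  have h : ((c + ⟪w, q - p⟫ + ⟪u, p - q⟫ : ℝ) : EReal) ≤ c :=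
    calc ((c + ⟪w, q - p⟫ + ⟪u, p - q⟫ : ℝ) : EReal)
        = r p + ((⟪w, q - p⟫ : ℝ) : EReal) + ((⟪u, p - q⟫ : ℝ) : EReal) := by
          rw [hc]; norm_cast
      _ ≤ r q + ((⟪u, p - q⟫ : ℝ) : EReal) := by gcongr; exact hw q
      _ ≤ c := hc ▸ hu p
  rw [inner_sub_left, ← neg_sub p q, inner_neg_right] at *
  linarith [EReal.coe_le_coe_iff.mp h]

theorem IsProxPoint.isERealSubgrad {a : ℝ} {z p : E} (hp : IsProxPoint r a z p) (ha : 0 < a)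
    (hr : ERealConvexOn univ r) (htop : r p ≠ ⊤) (hbot : r p ≠ ⊥) :
    IsERealSubgrad r p (a⁻¹ • (z - p)) := by
  intro y
  obtain ⟨c, hc⟩ : ∃ c : ℝ, r p = c := ⟨_, (EReal.coe_toReal htop hbot).symm⟩
  rcases eq_or_ne (r y) ⊤ with hy | hytop
  · exact hy ▸ le_top
  have hybot : r y ≠ ⊥ := by
    intro hy
    have h := hp y
    rw [hy, EReal.bot_add, le_bot_iff, hc, ← EReal.coe_add] at h
    exact EReal.coe_ne_bot _ h
  obtain ⟨d, hd⟩ : ∃ d : ℝ, r y = d := ⟨_, (EReal.coe_toReal hytop hybot).symm⟩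
  rw [hc, hd, ← EReal.coe_add, EReal.coe_le_coe_iff]
  refine le_of_forall_pos_le_add_mul (c := 1 / (2 * a) * ‖y - p‖ ^ 2) fun t ht0 ht1 => ?_
  -- test the minimality of `p` against `(1 - t) • p + t • y`, then let `t → 0`
  have hconv : r ((1 - t) • p + t • y) ≤ (((1 - t) * c + t * d : ℝ) : EReal) := by
    have := hr p (mem_univ p) y (mem_univ y) (1 - t) t (sub_nonneg.2 ht1) ht0.le (by ring)
    rwa [hc, hd] at this
  have hmin : c + 1 / (2 * a) * ‖p - z‖ ^ 2
      ≤ (1 - t) * c + t * d + 1 / (2 * a) * ‖(1 - t) • p + t • y - z‖ ^ 2 := by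
    have := (hp ((1 - t) • p + t • y)).trans (add_le_add_left hconv _)
    rwa [hc, ← EReal.coe_add, ← EReal.coe_add, EReal.coe_le_coe_iff] at this
  have hexp : ‖(1 - t) • p + t • y - z‖ ^ 2
      = ‖p - z‖ ^ 2 + 2 * t * ⟪p - z, y - p⟫ + t ^ 2 * ‖y - p‖ ^ 2 := by
    rw [show (1 - t) • p + t • y - z = (p - z) + t • (y - p) by module, norm_add_sq_real,
      real_inner_smul_right, norm_smul, Real.norm_eq_abs, mul_pow, sq_abs]
    ring
  rw [hexp] at hmin
  have hinner : ⟪a⁻¹ • (z - p), y - p⟫ = -(2 * (1 / (2 * a))) * ⟪p - z, y - p⟫ := by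
    rw [real_inner_smul_left, ← neg_sub p z, inner_neg_left]
    field_simp
  rw [hinner]
  have hscaled : t * (c + -(2 * (1 / (2 * a))) * ⟪p - z, y - p⟫)
      ≤ t * (d + t * (1 / (2 * a) * ‖y - p‖ ^ 2)) := by
    linarith
  exact le_of_mul_le_mul_left hscaled ht0

theorem IsProxPoint.sq_norm_sub_le {a : ℝ} {z p q u : E} (hp : IsProxPoint r a z p) (ha : 0 < a)
    (hr : ERealConvexOn univ r) (htop : r p ≠ ⊤) (hbot : r p ≠ ⊥) (hu : IsERealSubgrad r q u) :
    ‖p - q‖ ^ 2 ≤ ‖z - (q + a • u)‖ ^ 2 := by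
  have hmono := (hp.isERealSubgrad ha hr htop hbot).inner_sub_nonneg hu htop hbot
  have hfirm : ‖p - q‖ ^ 2 ≤ ⟪z - (q + a • u), p - q⟫ := by
    have hsplit : z - (q + a • u) = a • (a⁻¹ • (z - p) - u) + (p - q) := by
      rw [smul_sub, smul_inv_smul₀ ha.ne']
      abel
    rw [hsplit, inner_add_left, real_inner_smul_left, real_inner_self_eq_norm_sq]
    nlinarith [mul_nonneg ha.le hmono]
  have hcs := real_inner_le_norm (z - (q + a • u)) (p - q)
  nlinarith [norm_nonneg (p - q), norm_nonneg (z - (q + a • u)),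
    sq_nonneg (‖z - (q + a • u)‖ - ‖p - q‖)]

end ProximalMap

section SecondMoment

variable {Ω : Type*} [MeasurableSpace Ω] {P : Measure Ω}
  {E : Type*} [NormedAddCommGroup E] {X : Ω → E} {M : ℝ}

theorem memLp_two_of_lintegral_sq_norm_le (hX : AEStronglyMeasurable X P)
    (hM : ∫⁻ ξ, ENNReal.ofReal (‖X ξ‖ ^ 2) ∂P ≤ ENNReal.ofReal M) : MemLp X 2 P := by
  refine (memLp_two_iff_integrable_sq_norm hX).2 ⟨hX.norm.pow 2, ?_⟩
  rw [hasFiniteIntegral_iff_ofReal (ae_of_all _ fun ξ => by positivity)]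
  exact hM.trans_lt ENNReal.ofReal_lt_top

theorem integral_sq_norm_le_of_lintegral_le (hX : MemLp X 2 P) (hM0 : 0 ≤ M)
    (hM : ∫⁻ ξ, ENNReal.ofReal (‖X ξ‖ ^ 2) ∂P ≤ ENNReal.ofReal M) :
    ∫ ξ, ‖X ξ‖ ^ 2 ∂P ≤ M := by
  rw [← ENNReal.ofReal_le_ofReal_iff hM0, ofReal_integral_eq_lintegral_ofReal
    (hX.integrable_norm_pow two_ne_zero) (ae_of_all _ fun ξ => by positivity)]
  exact hM

variable [InnerProductSpace ℝ E] [IsProbabilityMeasure P]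

theorem integral_sq_norm_sub_const_le (hX : MemLp X 2 P) (w : E) :
    ∫ ξ, ‖X ξ - w‖ ^ 2 ∂P ≤ 2 * ∫ ξ, ‖X ξ‖ ^ 2 ∂P + 2 * ‖w‖ ^ 2 := by
  have hXw : MemLp (fun ξ => X ξ - w) 2 P := hX.sub (memLp_const w)
  calc ∫ ξ, ‖X ξ - w‖ ^ 2 ∂P ≤ ∫ ξ, (2 * ‖X ξ‖ ^ 2 + 2 * ‖w‖ ^ 2) ∂P := by
        refine integral_mono (hXw.integrable_norm_pow two_ne_zero)
          (((hX.integrable_norm_pow two_ne_zero).const_mul 2).add (integrable_const _))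
          fun ξ => ?_
        linarith [parallelogram_law_with_norm ℝ (X ξ) w, sq_nonneg ‖X ξ + w‖]
    _ = 2 * ∫ ξ, ‖X ξ‖ ^ 2 ∂P + 2 * ‖w‖ ^ 2 := by
        rw [integral_add ((hX.integrable_norm_pow two_ne_zero).const_mul 2) (integrable_const _),
          integral_const_mul, integral_const, probReal_univ, one_smul]

theorem integral_sq_norm_sub_smul [CompleteSpace E] (hX : MemLp X 2 P) (c : E) (a : ℝ) :
    ∫ ξ, ‖c - a • X ξ‖ ^ 2 ∂P
      = ‖c‖ ^ 2 - 2 * a * ⟪c, ∫ ξ, X ξ ∂P⟫ + a ^ 2 * ∫ ξ, ‖X ξ‖ ^ 2 ∂P := by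
  have hX1 : Integrable X P := hX.integrable one_le_two
  have hX2 : Integrable (fun ξ => ‖X ξ‖ ^ 2) P := hX.integrable_norm_pow two_ne_zero
  have hpoint : ∀ ξ, ‖c - a • X ξ‖ ^ 2 = ‖c‖ ^ 2 - 2 * a * ⟪c, X ξ⟫ + a ^ 2 * ‖X ξ‖ ^ 2 := by
    intro ξ
    rw [norm_sub_sq_real, real_inner_smul_right, norm_smul, Real.norm_eq_abs, mul_pow, sq_abs]
    ring
  have hinner : Integrable (fun ξ => 2 * a * ⟪c, X ξ⟫) P := (hX1.const_inner c).const_mul _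
  simp_rw [hpoint]
  rw [integral_add (f := fun ξ => ‖c‖ ^ 2 - 2 * a * ⟪c, X ξ⟫)
      ((integrable_const _).sub hinner) (hX2.const_mul _),
    integral_sub (integrable_const _) hinner,
    integral_const, probReal_univ, one_smul, integral_const_mul, integral_const_mul,
    integral_inner hX1]

end SecondMoment

theorem proximal_stochastic_subgradient_contraction_general
    {E : Type*} [NormedAddCommGroup E] [InnerProductSpace ℝ E] [FiniteDimensional ℝ E]
    {Ω : Type*} [MeasurableSpace Ω] (P : Measure Ω) [IsProbabilityMeasure P]
    (f : E → ℝ) (ρ : ℝ)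
    (hwc : ConvexOn ℝ Set.univ fun z => f z + ρ / 2 * ‖z‖ ^ 2)
    (r : E → EReal) (hrbot : ∀ y, r y ≠ ⊥)
    (hrconv : ERealConvexOn Set.univ r)
    (G : E → Ω → E)
    (L : ℝ)
    (hGint : ∀ z : E, r z ≠ ⊤ → Integrable (G z) P)
    (hGgrad : ∀ z : E, r z ≠ ⊤ → IsFSubgradR f z (∫ ξ, G z ξ ∂P))
    (hGmom : ∀ z : E, r z ≠ ⊤ →
      ∫⁻ ξ, ENNReal.ofReal (‖G z ξ‖ ^ 2) ∂P ≤ ENNReal.ofReal (L ^ 2))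
    (ρb : ℝ) (hρb1 : ρ < ρb) (hρb2 : ρb ≤ 2 * ρ)
    (a : ℝ) (ha1 : 0 < a) (ha2 : a * ρb ≤ 1)
    (x : E) (hxdom : r x ≠ ⊤)
    (xhat : E)
    (vhat : E) (hvhat : IsFSubgradR f xhat vhat) (hvhatnorm : ‖vhat‖ ≤ L)
    (hstat : ∀ y : E,
      r xhat + ((⟪ρb • (x - xhat) - vhat, y - xhat⟫ : ℝ) : EReal) ≤ r y)
    (s : Ω → E)
    (hs : ∀ ξ : Ω, ∀ y : E,
      r (s ξ) + ((1 / (2 * a) * ‖s ξ - (x - a • G x ξ)‖ ^ 2 : ℝ) : EReal)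
        ≤ r y + ((1 / (2 * a) * ‖y - (x - a • G x ξ)‖ ^ 2 : ℝ) : EReal)) :
    ∫ ξ, ‖s ξ - xhat‖ ^ 2 ∂P
      ≤ ‖x - xhat‖ ^ 2 + 4 * a ^ 2 * L ^ 2 - 2 * a * (ρb - ρ) * ‖x - xhat‖ ^ 2 := by
  have hG : MemLp (G x) 2 P :=
    memLp_two_of_lintegral_sq_norm_le (hGint x hxdom).aestronglyMeasurable (hGmom x hxdom)
  have hGv : MemLp (fun ξ => G x ξ - vhat) 2 P := hG.sub (memLp_const vhat)
  set c := (1 - a * ρb) • (x - xhat)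
  have hstep : ∀ ξ, ‖s ξ - xhat‖ ^ 2 ≤ ‖c - a • (G x ξ - vhat)‖ ^ 2 := fun ξ => by
    have hprox : IsProxPoint r a (x - a • G x ξ) (s ξ) := hs ξ
    convert hprox.sq_norm_sub_le ha1 hrconv (hprox.ne_top hxdom) (hrbot _) hstat using 3
    module
  have hmono := (hGgrad x hxdom).hypomonotone (by linarith) hwc hvhat
  have hvar : ∫ ξ, ‖G x ξ - vhat‖ ^ 2 ∂P ≤ 4 * L ^ 2 := by
    have hmom := integral_sq_norm_le_of_lintegral_le hG (sq_nonneg L) (hGmom x hxdom)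
    have hsplit := integral_sq_norm_sub_const_le hG vhat
    nlinarith [norm_nonneg vhat]
  calc ∫ ξ, ‖s ξ - xhat‖ ^ 2 ∂P ≤ ∫ ξ, ‖c - a • (G x ξ - vhat)‖ ^ 2 ∂P :=
        integral_mono_of_nonneg (ae_of_all _ fun _ => by positivity)
          (((memLp_const c).sub (hGv.const_smul a)).integrable_norm_pow two_ne_zero)
          (ae_of_all _ hstep)
    _ = (1 - a * ρb) ^ 2 * ‖x - xhat‖ ^ 2
          - 2 * a * (1 - a * ρb) * ⟪∫ ξ, G x ξ ∂P - vhat, x - xhat⟫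
          + a ^ 2 * ∫ ξ, ‖G x ξ - vhat‖ ^ 2 ∂P := by
        rw [integral_sq_norm_sub_smul hGv, integral_sub (hGint x hxdom) (integrable_const _),
          integral_const, probReal_univ, one_smul, norm_smul, mul_pow, Real.norm_eq_abs, sq_abs,
          real_inner_smul_left, real_inner_comm]
        ring
    _ ≤ ‖x - xhat‖ ^ 2 + 4 * a ^ 2 * L ^ 2 - 2 * a * (ρb - ρ) * ‖x - xhat‖ ^ 2 := by
        nlinarith [mul_le_mul_of_nonneg_left hmono (mul_nonneg ha1.le (sub_nonneg.2 ha2)),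
          mul_le_mul_of_nonneg_left hvar (sq_nonneg a),
          mul_nonneg (mul_nonneg (sq_nonneg a) (by linarith : (0 : ℝ) ≤ ρb))
            (mul_nonneg (by linarith : (0 : ℝ) ≤ 2 * ρ - ρb) (sq_nonneg ‖x - xhat‖))]

/-- One step of the proximal stochastic subgradient method on `φ = f + r`, with `f`
`ρ`-weakly convex, `r` proper closed convex, stochastic subgradient oracle `G` with second
moment bound `L²`, `ρ̄ ∈ (ρ, 2ρ]`, stepsize `α ∈ (0, 1/ρ̄]`, proximal point
`x̂ = prox_{φ/ρ̄}(x)`, and a subgradient `v̂ ∈ ∂f(x̂)` with `‖v̂‖ ≤ L` such that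
`ρ̄(x − x̂) − v̂ ∈ ∂r(x̂)`.  The step `x⁺(ξ) = prox_{αr}(x − αG(x,ξ))` satisfies
`E‖x⁺(ξ) − x̂‖² ≤ ‖x − x̂‖² + 4α²L² − 2α(ρ̄ − ρ)‖x − x̂‖²`. -/
theorem proximal_stochastic_subgradient_contraction
    {E : Type*} [NormedAddCommGroup E] [InnerProductSpace ℝ E] [FiniteDimensional ℝ E]
    [MeasurableSpace E] [BorelSpace E]
    {Ω : Type*} [MeasurableSpace Ω] (P : Measure Ω) [IsProbabilityMeasure P]
    (f : E → ℝ) (ρ : ℝ)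
    (hwc : ConvexOn ℝ Set.univ fun z => f z + ρ / 2 * ‖z‖ ^ 2)
    (r : E → EReal) (hrbot : ∀ y, r y ≠ ⊥) (hrproper : ∃ y, r y ≠ ⊤)
    (hrlsc : LowerSemicontinuous r) (hrconv : ERealConvexOn Set.univ r)
    (G : E → Ω → E) (hGmeas : Measurable fun p : E × Ω => G p.1 p.2)
    (L : ℝ)
    (hGint : ∀ z : E, r z ≠ ⊤ → Integrable (G z) P)
    (hGgrad : ∀ z : E, r z ≠ ⊤ → IsFSubgradR f z (∫ ξ, G z ξ ∂P))
    (hGmom : ∀ z : E, r z ≠ ⊤ →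
      ∫⁻ ξ, ENNReal.ofReal (‖G z ξ‖ ^ 2) ∂P ≤ ENNReal.ofReal (L ^ 2))
    (ρb : ℝ) (hρb1 : ρ < ρb) (hρb2 : ρb ≤ 2 * ρ)
    (a : ℝ) (ha1 : 0 < a) (ha2 : a * ρb ≤ 1)
    (x : E) (hxdom : r x ≠ ⊤)
    (xhat : E)
    (hxhatmin : ∀ y : E,
      (f xhat : EReal) + r xhat + ((ρb / 2 * ‖xhat - x‖ ^ 2 : ℝ) : EReal)
        ≤ (f y : EReal) + r y + ((ρb / 2 * ‖y - x‖ ^ 2 : ℝ) : EReal))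
    (vhat : E) (hvhat : IsFSubgradR f xhat vhat) (hvhatnorm : ‖vhat‖ ≤ L)
    (hstat : ∀ y : E,
      r xhat + ((⟪ρb • (x - xhat) - vhat, y - xhat⟫ : ℝ) : EReal) ≤ r y)
    (s : Ω → E)
    (hs : ∀ ξ : Ω, ∀ y : E,
      r (s ξ) + ((1 / (2 * a) * ‖s ξ - (x - a • G x ξ)‖ ^ 2 : ℝ) : EReal)
        ≤ r y + ((1 / (2 * a) * ‖y - (x - a • G x ξ)‖ ^ 2 : ℝ) : EReal)) :
    ∫ ξ, ‖s ξ - xhat‖ ^ 2 ∂P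
      ≤ ‖x - xhat‖ ^ 2 + 4 * a ^ 2 * L ^ 2 - 2 * a * (ρb - ρ) * ‖x - xhat‖ ^ 2 :=
  proximal_stochastic_subgradient_contraction_general P f ρ hwc r hrbot hrconv G L hGint hGgrad
    hGmom ρb hρb1 hρb2 a ha1 ha2 x hxdom xhat vhat hvhat hvhatnorm hstat s hs
end

section
/- Let r : ℝ^d → ℝ ∪ {+∞} be proper and closed, f : ℝ^d → ℝ locally Lipschitz, U ⊆ ℝ^d an open convex set containing dom r, and (Ω, F, P) a probability space. Suppose a measurable stochastic one-sided model (x, y, ξ) ↦ f_x(y, ξ) on U × U × Ω satisfies: (B2) ∫ f_x(x,ξ) dP(ξ) = f(x) for all x ∈ U and ∫ (f_x(y,ξ) − f(y)) dP(ξ) ≤ (τ/2)‖y − x‖² for all x, y ∈ U; (B3) for every x ∈ U and P-a.e. ξ, the function f_x(·,ξ) + r(·) is η-weakly convex; and (B4) there is a measurable L : Ω → ℝ₊ with √(∫ L(ξ)² dP(ξ)) ≤ 𝖫 such that f_x(x,ξ) − f_x(y,ξ) ≤ L(ξ)‖x − y‖ for all x, y ∈ U and P-a.e. ξ. Then: (i)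 the function φ = f + r is (τ + η)-weakly convex; and (ii) f is 𝖫-Lipschitz on U, i.e., |f(x) − f(y)| ≤ 𝖫‖x − y‖ for all x, y ∈ U. -/
/-!
Everything comes from averaging the model inequalities over `ξ`. For weak convexity, take
`x, y ∈ dom r` and `z = a x + b y ∈ U`: integrating the convexity inequality of
`f_z(·, ξ) + r + (η/2)‖·‖²` at `z` and bounding `E f_z(x, ξ)`, `E f_z(y, ξ)` by one-sided
accuracy leaves the penalty `(τ/2)(a b² + b a²)‖x - y‖² = (τ/2) a b ‖x - y‖²`, which is exactly
what `(τ/2)‖·‖²` absorbs. For the Lipschitz bound, averaging (B4) at the centre gives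
`f x - f y ≤ 𝖫‖x - y‖ + (τ/2)‖x - y‖²`, using `E L ≤ √(E L²) ≤ 𝖫`; applying this along `n` equal
steps of the segment `[x, y]` shrinks the quadratic term to `O(1/n)`.
-/

open MeasureTheory RealInnerProductSpace ProbabilityTheory

theorem integral_le_of_lintegral_sq_le {Ω : Type*} [MeasurableSpace Ω] {P : Measure Ω}
    [IsProbabilityMeasure P] {L : Ω → ℝ} (hL : AEStronglyMeasurable L P) {c : ℝ} (hc : 0 ≤ c)
    (hLc : ∫⁻ ξ, ENNReal.ofReal (L ξ ^ 2) ∂P ≤ ENNReal.ofReal (c ^ 2)) :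
    Integrable L P ∧ ∫ ξ, L ξ ∂P ≤ c := by
  have hsq_nonneg : 0 ≤ᵐ[P] fun ξ => L ξ ^ 2 := ae_of_all _ fun ξ => sq_nonneg (L ξ)
  have hsq : Integrable (fun ξ => L ξ ^ 2) P :=
    ⟨hL.pow 2, (hasFiniteIntegral_iff_ofReal hsq_nonneg).2 (hLc.trans_lt ENNReal.ofReal_lt_top)⟩
  have hL2 : MemLp L 2 P := (memLp_two_iff_integrable_sq hL).2 hsq
  have hsq_le : ∫ ξ, L ξ ^ 2 ∂P ≤ c ^ 2 := by
    rw [← ENNReal.ofReal_le_ofReal_iff (sq_nonneg c), ofReal_integral_eq_lintegral_ofReal hsq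
      hsq_nonneg]
    exact hLc
  have hmean_sq : (∫ ξ, L ξ ∂P) ^ 2 ≤ ∫ ξ, L ξ ^ 2 ∂P := by
    have := variance_nonneg L P
    rw [variance_eq_sub hL2] at this
    simpa only [Pi.pow_apply, sub_nonneg] using this
  exact ⟨hL2.integrable one_le_two,
    (le_abs_self _).trans (abs_le_of_sq_le_sq (hmean_sq.trans hsq_le) hc)⟩

section Subdivision

variable {E : Type*} [SeminormedAddCommGroup E] [NormedSpace ℝ E] {U : Set E} {f : E → ℝ}
  {K C : ℝ}

theorem Convex.sub_le_add_div_of_sub_le_add_sq (hU : Convex ℝ U)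
    (hf : ∀ u ∈ U, ∀ v ∈ U, f u - f v ≤ K * ‖u - v‖ + C * ‖u - v‖ ^ 2)
    {x y : E} (hx : x ∈ U) (hy : y ∈ U) {n : ℕ} (hn : 0 < n) :
    f x - f y ≤ K * ‖x - y‖ + C * ‖x - y‖ ^ 2 / n := by
  set p : ℕ → E := fun i => AffineMap.lineMap x y ((i : ℝ) / n)
  have hn' : (0 : ℝ) < n := Nat.cast_pos.2 hn
  have hp_mem : ∀ i ≤ n, p i ∈ U := fun i hi =>
    hU.lineMap_mem hx hy ⟨by positivity, div_le_one_of_le₀ (by exact_mod_cast hi) hn'.le⟩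
  have hp_step : ∀ i, ‖p i - p (i + 1)‖ = ‖x - y‖ / n := fun i => by
    rw [← dist_eq_norm, ← dist_eq_norm, dist_lineMap_lineMap, Real.dist_eq,
      show (i : ℝ) / n - ((i + 1 : ℕ) : ℝ) / n = -(1 / n) by push_cast; ring,
      abs_neg, abs_of_pos (by positivity)]
    ring
  calc f x - f y = ∑ i ∈ Finset.range n, (f (p i) - f (p (i + 1))) := by
        rw [Finset.sum_range_sub']
        simp [p, hn'.ne']
    _ ≤ ∑ _i ∈ Finset.range n, (K * (‖x - y‖ / n) + C * (‖x - y‖ / n) ^ 2) := by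
        refine Finset.sum_le_sum fun i hi => ?_
        rw [← hp_step i]
        have hi := Finset.mem_range.1 hi
        exact hf _ (hp_mem i hi.le) _ (hp_mem (i + 1) hi)
    _ = K * ‖x - y‖ + C * ‖x - y‖ ^ 2 / n := by
        rw [Finset.sum_const, Finset.card_range, nsmul_eq_mul]
        field_simp

theorem Convex.sub_le_mul_norm_of_sub_le_add_sq (hU : Convex ℝ U)
    (hf : ∀ u ∈ U, ∀ v ∈ U, f u - f v ≤ K * ‖u - v‖ + C * ‖u - v‖ ^ 2)
    {x y : E} (hx : x ∈ U) (hy : y ∈ U) : f x - f y ≤ K * ‖x - y‖ := by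
  have hlim : Filter.Tendsto (fun n : ℕ => K * ‖x - y‖ + C * ‖x - y‖ ^ 2 / n) Filter.atTop
      (nhds (K * ‖x - y‖)) := by
    simpa using tendsto_const_nhds.add (tendsto_const_div_atTop_nhds_zero_nat (C * ‖x - y‖ ^ 2))
  exact ge_of_tendsto hlim (Filter.eventually_atTop.2
    ⟨1, fun n hn => hU.sub_le_add_div_of_sub_le_add_sq hf hx hy hn⟩)

end Subdivision

theorem ERealConvexOn.univ_of_dom_subset {E : Type*} [AddCommMonoid E] [Module ℝ E]
    {s : Set E} {g : E → EReal} (hg : ERealConvexOn s g) (hbot : ∀ x, g x ≠ ⊥)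
    (hdom : {x | g x ≠ ⊤} ⊆ s) : ERealConvexOn Set.univ g := by
  intro x _ y _ a b ha hb hab
  obtain rfl | ha := ha.eq_or_lt
  · obtain rfl : b = 1 := by linarith
    simp
  obtain rfl | hb := hb.eq_or_lt
  · obtain rfl : a = 1 := by linarith
    simp
  have hmul_ne_bot : ∀ {t : ℝ}, 0 < t → ∀ w, (t : EReal) * g w ≠ ⊥ := fun ht w =>
    (EReal.mul_ne_bot _ _).2 ⟨.inl (EReal.coe_ne_bot _), .inr (hbot w), .inl (EReal.coe_ne_top _),
      .inl (EReal.coe_nonneg.2 ht.le)⟩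
  by_cases hx : g x = ⊤
  · rw [hx, EReal.coe_mul_top_of_pos ha, EReal.top_add_of_ne_bot (hmul_ne_bot hb y)]
    exact le_top
  by_cases hy : g y = ⊤
  · rw [hy, EReal.coe_mul_top_of_pos hb, EReal.add_top_of_ne_bot (hmul_ne_bot ha x)]
    exact le_top
  exact hg x (hdom hx) y (hdom hy) a b ha.le hb.le hab

theorem sub_le_mul_norm_add_sq_of_model {E : Type*} [SeminormedAddCommGroup E]
    {Ω : Type*} [MeasurableSpace Ω] {P : Measure Ω} [IsProbabilityMeasure P]
    {F : E → E → Ω → ℝ} {f : E → ℝ} {τ : ℝ} {x y : E} (hxx : Integrable (F x x) P)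
    (hxy : Integrable (F x y) P) (hcenter : ∫ ξ, F x x ξ ∂P = f x)
    (hacc : ∫ ξ, (F x y ξ - f y) ∂P ≤ τ / 2 * ‖y - x‖ ^ 2) {L : Ω → ℝ} {K : ℝ}
    (hL : Integrable L P) (hLK : ∫ ξ, L ξ ∂P ≤ K)
    (hlip : ∀ᵐ ξ ∂P, F x x ξ - F x y ξ ≤ L ξ * ‖x - y‖) :
    f x - f y ≤ K * ‖x - y‖ + τ / 2 * ‖x - y‖ ^ 2 := by
  have hgap := integral_mono_ae (f := fun ξ => F x x ξ - F x y ξ) (hxx.sub hxy)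
    (hL.mul_const ‖x - y‖) hlip
  rw [integral_sub hxx hxy, integral_mul_const, hcenter] at hgap
  rw [integral_sub hxy (integrable_const _), integral_const, probReal_univ, one_smul,
    norm_sub_rev] at hacc
  nlinarith [mul_le_mul_of_nonneg_right hLK (norm_nonneg (x - y))]

section Model

variable {E : Type*} [NormedAddCommGroup E] [InnerProductSpace ℝ E]
  {Ω : Type*} [MeasurableSpace Ω] {P : Measure Ω} [IsProbabilityMeasure P]
  {F : E → E → Ω → ℝ} {f : E → ℝ} {U : Set E} {τ η : ℝ}

theorem norm_smul_add_smul_sq {a b : ℝ} (hab : a + b = 1) (x y : E) :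
    ‖a • x + b • y‖ ^ 2 = a * ‖x‖ ^ 2 + b * ‖y‖ ^ 2 - a * b * ‖x - y‖ ^ 2 := by
  rw [norm_add_sq_real, norm_sub_sq_real, norm_smul, norm_smul, real_inner_smul_left,
    real_inner_smul_right, mul_pow, mul_pow, Real.norm_eq_abs, Real.norm_eq_abs, sq_abs, sq_abs]
  obtain rfl := eq_sub_of_add_eq hab
  ring

theorem convexComb_le_of_model (hFint : ∀ x ∈ U, ∀ y ∈ U, Integrable (F x y) P)
    (hcenter : ∀ x ∈ U, ∫ ξ, F x x ξ ∂P = f x)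
    (hacc : ∀ x ∈ U, ∀ y ∈ U, ∫ ξ, (F x y ξ - f y) ∂P ≤ τ / 2 * ‖y - x‖ ^ 2) (ρ : E → ℝ)
    {x y : E} (hx : x ∈ U) (hy : y ∈ U) {a b : ℝ} (ha : 0 ≤ a) (hb : 0 ≤ b) (hab : a + b = 1)
    (hz : a • x + b • y ∈ U)
    (hmodel : ∀ᵐ ξ ∂P, F (a • x + b • y) (a • x + b • y) ξ + ρ (a • x + b • y) +
      η / 2 * ‖a • x + b • y‖ ^ 2 ≤ a * (F (a • x + b • y) x ξ + ρ x + η / 2 * ‖x‖ ^ 2) +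
        b * (F (a • x + b • y) y ξ + ρ y + η / 2 * ‖y‖ ^ 2)) :
    f (a • x + b • y) + ρ (a • x + b • y) + (τ + η) / 2 * ‖a • x + b • y‖ ^ 2 ≤
      a * (f x + ρ x + (τ + η) / 2 * ‖x‖ ^ 2) + b * (f y + ρ y + (τ + η) / 2 * ‖y‖ ^ 2) := by
  obtain rfl := eq_sub_of_add_eq hab
  set z := (1 - b) • x + b • y
  have hzz := hFint z hz z hz
  have hzx := hFint z hz x hx
  have hzy := hFint z hz y hy
  have havg : f z + ρ z + η / 2 * ‖z‖ ^ 2 ≤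
      (1 - b) * (∫ ξ, F z x ξ ∂P + ρ x + η / 2 * ‖x‖ ^ 2) +
        b * (∫ ξ, F z y ξ ∂P + ρ y + η / 2 * ‖y‖ ^ 2) := by
    have := integral_mono_ae (by fun_prop) (by fun_prop) hmodel
    simpa (disch := fun_prop) [integral_add, integral_const_mul, hcenter z hz] using this
  have hmodel_le : ∀ w ∈ U, ∫ ξ, F z w ξ ∂P ≤ f w + τ / 2 * ‖w - z‖ ^ 2 := fun w hw => by
    have := hacc z hz w hw
    rw [integral_sub (hFint z hz w hw) (integrable_const _), integral_const, probReal_univ,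
      one_smul] at this
    linarith
  have hxz : ‖x - z‖ = b * ‖x - y‖ := by
    rw [show x - z = b • (x - y) by module, norm_smul, Real.norm_of_nonneg hb]
  have hyz : ‖y - z‖ = (1 - b) * ‖x - y‖ := by
    rw [show y - z = (1 - b) • (y - x) by module, norm_smul, Real.norm_of_nonneg ha, norm_sub_rev]
  have hx_le := mul_le_mul_of_nonneg_left (hmodel_le x hx) ha
  have hy_le := mul_le_mul_of_nonneg_left (hmodel_le y hy) hb
  have hsq : ‖z‖ ^ 2 = (1 - b) * ‖x‖ ^ 2 + b * ‖y‖ ^ 2 - (1 - b) * b * ‖x - y‖ ^ 2 :=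
    norm_smul_add_smul_sq hab x y
  rw [hxz] at hx_le
  rw [hyz] at hy_le
  linear_combination havg + hx_le + hy_le + τ / 2 * hsq

theorem erealConvexOn_dom_of_model {r : E → EReal} (hrbot : ∀ y, r y ≠ ⊥) (hU : Convex ℝ U)
    (hdom : {y | r y ≠ ⊤} ⊆ U) (hFint : ∀ x ∈ U, ∀ y ∈ U, Integrable (F x y) P)
    (hcenter : ∀ x ∈ U, ∫ ξ, F x x ξ ∂P = f x)
    (hacc : ∀ x ∈ U, ∀ y ∈ U, ∫ ξ, (F x y ξ - f y) ∂P ≤ τ / 2 * ‖y - x‖ ^ 2)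
    (hweak : ∀ x ∈ U, ∀ᵐ ξ ∂P, ERealConvexOn U
      (fun y => (F x y ξ : EReal) + r y + ((η / 2 * ‖y‖ ^ 2 : ℝ) : EReal))) :
    ERealConvexOn {y | r y ≠ ⊤}
      (fun y => (f y : EReal) + r y + (((τ + η) / 2 * ‖y‖ ^ 2 : ℝ) : EReal)) := by
  intro x hrx y hry a b ha hb hab
  have hx := hdom hrx
  have hy := hdom hry
  have hz := hU hx hy ha hb hab
  set z := a • x + b • y
  have hmodel : ∀ᵐ ξ ∂P, (F z z ξ : EReal) + r z + ((η / 2 * ‖z‖ ^ 2 : ℝ) : EReal) ≤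
      ((a * (F z x ξ + (r x).toReal + η / 2 * ‖x‖ ^ 2) +
        b * (F z y ξ + (r y).toReal + η / 2 * ‖y‖ ^ 2) : ℝ) : EReal) := by
    filter_upwards [hweak z hz] with ξ hξ
    have := hξ x hx y hy a b ha hb hab
    beta_reduce at this
    rw [← EReal.coe_toReal hrx (hrbot x), ← EReal.coe_toReal hry (hrbot y)] at this
    exact_mod_cast this
  -- `r z` is finite because a single `ξ` bounds it by the finite right-hand side.
  have hrz : r z ≠ ⊤ := fun hrz => by
    obtain ⟨ξ, hξ⟩ := hmodel.exists
    rw [hrz, EReal.coe_add_top, EReal.top_add_coe, top_le_iff] at hξ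
    exact EReal.coe_ne_top _ hξ
  have key := convexComb_le_of_model hFint hcenter hacc (fun w => (r w).toReal) hx hy ha hb hab
    hz (by
      filter_upwards [hmodel] with ξ hξ
      rw [← EReal.coe_toReal hrz (hrbot z)] at hξ
      exact_mod_cast hξ)
  beta_reduce
  rw [← EReal.coe_toReal hrx (hrbot x), ← EReal.coe_toReal hry (hrbot y),
    ← EReal.coe_toReal hrz (hrbot z)]
  exact_mod_cast key

end Model

theorem one_sided_model_weak_convexity_and_lipschitz_general
    {E : Type*} [NormedAddCommGroup E] [InnerProductSpace ℝ E]
    {Ω : Type*} [MeasurableSpace Ω] (P : Measure Ω) [IsProbabilityMeasure P]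
    (r : E → EReal) (hrbot : ∀ y, r y ≠ ⊥)
    (f : E → ℝ)
    (U : Set E) (hUconv : Convex ℝ U)
    (hUdom : {y : E | r y ≠ ⊤} ⊆ U)
    (F : E → E → Ω → ℝ)
    (τ η LL : ℝ) (hLL : 0 ≤ LL)
    (hFint : ∀ x ∈ U, ∀ y ∈ U, Integrable (fun ξ => F x y ξ) P)
    (hB2center : ∀ x ∈ U, ∫ ξ, F x x ξ ∂P = f x)
    (hB2acc : ∀ x ∈ U, ∀ y ∈ U, ∫ ξ, (F x y ξ - f y) ∂P ≤ τ / 2 * ‖y - x‖ ^ 2)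
    (hB3 : ∀ x ∈ U, ∀ᵐ ξ ∂P, ERealConvexOn U
      (fun y => (F x y ξ : EReal) + r y + ((η / 2 * ‖y‖ ^ 2 : ℝ) : EReal)))
    (L : Ω → ℝ) (hLmeas : Measurable L)
    (hLmom : ∫⁻ ξ, ENNReal.ofReal (L ξ ^ 2) ∂P ≤ ENNReal.ofReal (LL ^ 2))
    (hB4 : ∀ x ∈ U, ∀ y ∈ U, ∀ᵐ ξ ∂P, F x x ξ - F x y ξ ≤ L ξ * ‖x - y‖) :
    ERealConvexOn Set.univ
      (fun y => (f y : EReal) + r y + (((τ + η) / 2 * ‖y‖ ^ 2 : ℝ) : EReal)) ∧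
    ∀ x ∈ U, ∀ y ∈ U, |f x - f y| ≤ LL * ‖x - y‖ := by
  obtain ⟨hLint, hLmean⟩ := integral_le_of_lintegral_sq_le hLmeas.aestronglyMeasurable hLL hLmom
  have hone_sided : ∀ x ∈ U, ∀ y ∈ U, f x - f y ≤ LL * ‖x - y‖ :=
    fun x hx y hy => hUconv.sub_le_mul_norm_of_sub_le_add_sq (fun u hu v hv =>
      sub_le_mul_norm_add_sq_of_model (hFint u hu u hu) (hFint u hu v hv) (hB2center u hu)
        (hB2acc u hu v hv) hLint hLmean (hB4 u hu v hv)) hx hy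
  have hconv := erealConvexOn_dom_of_model hrbot hUconv hUdom hFint hB2center hB2acc hB3
  refine ⟨hconv.univ_of_dom_subset
    (fun y => EReal.add_ne_bot_iff.2 ⟨EReal.add_ne_bot_iff.2 ⟨EReal.coe_ne_bot _, hrbot y⟩,
      EReal.coe_ne_bot _⟩)
    (fun y hy hry => hy (by rw [hry, EReal.coe_add_top, EReal.top_add_coe])),
    fun x hx y hy => abs_sub_le_iff.2 ⟨hone_sided x hx y hy, ?_⟩⟩
  rw [norm_sub_rev]
  exact hone_sided y hy x hx

/-- Lemma 4.1 of Davis–Drusvyatskiy: under the stochastic one-sided model assumptions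
(B2) one-sided accuracy, (B3) `η`-weak convexity of the models `f_x(·,ξ) + r`, and
(B4) the Lipschitz property with `√E[L(ξ)²] ≤ 𝖫`, the function `φ = f + r` is
`(τ + η)`-weakly convex and `f` is `𝖫`-Lipschitz on `U`. -/
theorem one_sided_model_weak_convexity_and_lipschitz
    {E : Type*} [NormedAddCommGroup E] [InnerProductSpace ℝ E] [FiniteDimensional ℝ E]
    [MeasurableSpace E] [BorelSpace E]
    {Ω : Type*} [MeasurableSpace Ω] (P : Measure Ω) [IsProbabilityMeasure P]
    (r : E → EReal) (hrbot : ∀ y, r y ≠ ⊥) (hrproper : ∃ y, r y ≠ ⊤)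
    (hrlsc : LowerSemicontinuous r)
    (f : E → ℝ) (hfll : LocallyLipschitz f)
    (U : Set E) (hUopen : IsOpen U) (hUconv : Convex ℝ U)
    (hUdom : {y : E | r y ≠ ⊤} ⊆ U)
    (F : E → E → Ω → ℝ)
    (hFmeas : Measurable fun p : E × E × Ω => F p.1 p.2.1 p.2.2)
    (τ η LL : ℝ) (hLL : 0 ≤ LL)
    (hFint : ∀ x ∈ U, ∀ y ∈ U, Integrable (fun ξ => F x y ξ) P)
    (hB2center : ∀ x ∈ U, ∫ ξ, F x x ξ ∂P = f x)
    (hB2acc : ∀ x ∈ U, ∀ y ∈ U, ∫ ξ, (F x y ξ - f y) ∂P ≤ τ / 2 * ‖y - x‖ ^ 2)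
    (hB3 : ∀ x ∈ U, ∀ᵐ ξ ∂P, ERealConvexOn U
      (fun y => (F x y ξ : EReal) + r y + ((η / 2 * ‖y‖ ^ 2 : ℝ) : EReal)))
    (L : Ω → ℝ) (hLmeas : Measurable L) (hLnn : ∀ ξ, 0 ≤ L ξ)
    (hLmom : ∫⁻ ξ, ENNReal.ofReal (L ξ ^ 2) ∂P ≤ ENNReal.ofReal (LL ^ 2))
    (hB4 : ∀ x ∈ U, ∀ y ∈ U, ∀ᵐ ξ ∂P, F x x ξ - F x y ξ ≤ L ξ * ‖x - y‖) :
    ERealConvexOn Set.univ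
      (fun y => (f y : EReal) + r y + (((τ + η) / 2 * ‖y‖ ^ 2 : ℝ) : EReal)) ∧
    ∀ x ∈ U, ∀ y ∈ U, |f x - f y| ≤ LL * ‖x - y‖ :=
  one_sided_model_weak_convexity_and_lipschitz_general P r hrbot f U hUconv hUdom F τ η LL hLL hFint
    hB2center hB2acc hB3 L hLmeas hLmom hB4
end
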